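/- arXiv:1604.00870 — 2 statements merged into one kernel-verified Lean document; each statement's English description precedes it below -/
import Mathlib

section
/- Let P be the transition matrix of the gladiator chain G_k(n) on S_n with team strengths s_1,…,s_k > 0 and s(g) the strength of gladiator g. Define the weight w(σ) = ∏_{g=1}^{n} s(g)^{σ^{-1}(g)}, where σ^{-1}(g) is the position of g in σ. Then w satisfies detailed balance: w(σ)·P(σ,τ) = w(τ)·P(τ,σ) for all σ, τ ∈ S_n. Consequently, the probability distribution π(σ) = w(σ)/∑_{τ∈S_n} w(τ) is a reversible (hence stationary) distribution for G_k(n). -/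
/-!
Swapping the adjacent gladiators `g = σ i` and `g' = σ (i + 1)` moves `g` one position later and
`g'` one position earlier, so it multiplies the weight by `s(g) / s(g')`. Hence the two probability
fluxes `w(σ) · s(g)/(s(g)+s(g'))` and `w(σ ∘ (i i+1)) · s(g')/(s(g)+s(g'))` agree, which is
detailed balance. Rows of the transition matrix sum to one (the `n - 1` positions are chosen with
probability `1/(n-1)` each), and detailed balance of a stochastic matrix gives stationarity.
-/

open Finset

/-- Transition matrix of the gladiator chain `G_k(n)`: from state `σ`, a position
`i` with `i+1 < n` is chosen uniformly at random; with probability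
`s(σ i)/(s(σ i)+s(σ (i+1)))` the two entries are swapped, and with the complementary
probability they stay. -/
noncomputable def gladP (n k : ℕ) (team : Fin n → Fin k) (s : Fin k → ℝ) :
    Matrix (Equiv.Perm (Fin n)) (Equiv.Perm (Fin n)) ℝ :=
  fun σ τ => (1 / ((n : ℝ) - 1)) * ∑ i : Fin n, ∑ j : Fin n,
    if (j : ℕ) = (i : ℕ) + 1 then
      (s (team (σ i)) / (s (team (σ i)) + s (team (σ j)))) *
        (if τ = σ * Equiv.swap i j then 1 else 0)
      + (s (team (σ j)) / (s (team (σ i)) + s (team (σ j)))) *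
        (if τ = σ then 1 else 0)
    else 0

/-- Unnormalized stationary weight of the gladiator chain:
`w(σ) = ∏_g s(g)^{σ⁻¹(g)}` (positions counted `1,…,n`). -/
noncomputable def gladW (n k : ℕ) (team : Fin n → Fin k) (s : Fin k → ℝ)
    (σ : Equiv.Perm (Fin n)) : ℝ :=
  ∏ g : Fin n, s (team g) ^ ((σ.symm g : ℕ) + 1)

/-- Stationary distribution of the gladiator chain. -/
noncomputable def gladPi (n k : ℕ) (team : Fin n → Fin k) (s : Fin k → ℝ)
    (σ : Equiv.Perm (Fin n)) : ℝ :=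
  gladW n k team s σ / ∑ τ : Equiv.Perm (Fin n), gladW n k team s τ

theorem Finset.prod_pow_mul_eq_prod_pow_add_ite {ι M : Type*} [Fintype ι] [DecidableEq ι]
    [CommMonoid M] (f : ι → M) (e : ι → ℕ) (a : ι) :
    (∏ x, f x ^ e x) * f a = ∏ x, f x ^ (e x + if a = x then 1 else 0) := by
  simp only [pow_add, Finset.prod_mul_distrib, Finset.prod_pow_boole, Finset.mem_univ, if_true]

theorem sum_mul_eq_of_detailed_balance {α R : Type*} [Fintype α] [CommSemiring R]
    {P : Matrix α α R} {π : α → R}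
    (hdb : ∀ x y, π x * P x y = π y * P y x) (hP : ∀ x, ∑ y, P x y = 1) (y : α) :
    ∑ x, π x * P x y = π y := by
  simp only [hdb _ y, ← Finset.mul_sum, hP, mul_one]

theorem Fin.sum_sum_ite_val_eq_add_one (n : ℕ) :
    ∑ i : Fin n, ∑ j : Fin n, (if (j : ℕ) = i + 1 then (1 : ℝ) else 0) =
      ((n - 1 : ℕ) : ℝ) := by
  rw [Fin.sum_univ_eq_sum_range (fun i => ∑ j : Fin n, if (j : ℕ) = i + 1 then (1 : ℝ) else 0),
    Finset.sum_congr rfl fun i _ =>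
    Fin.sum_univ_eq_sum_range (fun j => if j = i + 1 then (1 : ℝ) else 0) n]
  simp only [Finset.sum_ite_eq', Finset.mem_range]
  rcases n with _ | m
  · simp
  · rw [Finset.sum_range_succ, if_neg (by omega), add_zero,
      Finset.sum_congr rfl fun i hi => if_pos (by simpa using hi)]
    simp

theorem gladW_mul_swap (n k : ℕ) (team : Fin n → Fin k) (s : Fin k → ℝ)
    (σ : Equiv.Perm (Fin n)) {i j : Fin n} (hij : (j : ℕ) = i + 1) :
    gladW n k team s (σ * Equiv.swap i j) * s (team (σ j)) =
      gladW n k team s σ * s (team (σ i)) := by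
  unfold gladW
  rw [Finset.prod_pow_mul_eq_prod_pow_add_ite (fun g => s (team g)),
    Finset.prod_pow_mul_eq_prod_pow_add_ite (fun g => s (team g))]
  refine Finset.prod_congr rfl fun g _ => ?_
  obtain ⟨p, rfl⟩ := σ.surjective g
  simp only [Equiv.Perm.mul_def, Equiv.symm_trans_apply, Equiv.symm_apply_apply,
    Equiv.symm_swap, σ.injective.eq_iff]
  have hi : i ≠ j := fun h => by simp [h] at hij
  rcases eq_or_ne p i with rfl | hpi
  · simp [Ne.symm hi, hij]
  rcases eq_or_ne p j with rfl | hpj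
  · simp [hi, hij]
  · simp [Equiv.swap_apply_of_ne_of_ne hpi hpj, Ne.symm hpi, Ne.symm hpj]

theorem gladW_pos (n k : ℕ) (team : Fin n → Fin k) (s : Fin k → ℝ) (hs : ∀ j, 0 < s j)
    (σ : Equiv.Perm (Fin n)) : 0 < gladW n k team s σ :=
  Finset.prod_pos fun _ _ => pow_pos (hs _) _

noncomputable def gladMoveP (n k : ℕ) (team : Fin n → Fin k) (s : Fin k → ℝ)
    (σ τ : Equiv.Perm (Fin n)) (i j : Fin n) : ℝ :=
  if (j : ℕ) = (i : ℕ) + 1 then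
    (s (team (σ i)) / (s (team (σ i)) + s (team (σ j)))) *
      (if τ = σ * Equiv.swap i j then 1 else 0)
    + (s (team (σ j)) / (s (team (σ i)) + s (team (σ j)))) *
      (if τ = σ then 1 else 0)
  else 0

theorem gladP_eq_sum_gladMoveP (n k : ℕ) (team : Fin n → Fin k) (s : Fin k → ℝ)
    (σ τ : Equiv.Perm (Fin n)) :
    gladP n k team s σ τ = 1 / ((n : ℝ) - 1) * ∑ i, ∑ j, gladMoveP n k team s σ τ i j :=
  rfl

theorem gladW_mul_gladMoveP_comm (n k : ℕ) (team : Fin n → Fin k) (s : Fin k → ℝ)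
    (σ τ : Equiv.Perm (Fin n)) (i j : Fin n) :
    gladW n k team s σ * gladMoveP n k team s σ τ i j =
      gladW n k team s τ * gladMoveP n k team s τ σ i j := by
  unfold gladMoveP
  by_cases hij : (j : ℕ) = i + 1
  swap
  · simp only [if_neg hij, mul_zero]
  have hswap_ne : ∀ ρ : Equiv.Perm (Fin n), ρ * Equiv.swap i j ≠ ρ := fun ρ h => by
    have : i = j := Equiv.swap_eq_one_iff.mp (mul_eq_left.mp h)
    simp [this] at hij
  simp only [if_pos hij]
  by_cases hτ : τ = σ * Equiv.swap i j
  · subst hτ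
    simp only [mul_assoc, Equiv.swap_mul_self, mul_one, if_true, hswap_ne, (hswap_ne σ).symm,
      if_false, mul_zero, add_zero, Equiv.Perm.mul_apply, Equiv.swap_apply_left,
      Equiv.swap_apply_right]
    rw [← mul_div_assoc, ← mul_div_assoc, gladW_mul_swap n k team s σ hij, add_comm]
  by_cases hτσ : τ = σ
  · rw [hτσ]
  have hστ : σ ≠ τ * Equiv.swap i j := by
    rintro rfl
    simp [mul_assoc] at hτ
  simp [hτ, hτσ, hστ, Ne.symm hτσ]

theorem sum_gladMoveP (n k : ℕ) (team : Fin n → Fin k) (s : Fin k → ℝ) (hs : ∀ j, 0 < s j)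
    (σ : Equiv.Perm (Fin n)) (i j : Fin n) :
    ∑ τ, gladMoveP n k team s σ τ i j = if (j : ℕ) = i + 1 then 1 else 0 := by
  unfold gladMoveP
  split_ifs with hij
  · simp only [Finset.sum_add_distrib, ← Finset.mul_sum, Finset.sum_ite_eq', Finset.mem_univ,
      if_true, mul_one]
    rw [← add_div, div_self (add_pos (hs _) (hs _)).ne']
  · exact Finset.sum_const_zero

theorem gladW_mul_gladP_comm (n k : ℕ) (team : Fin n → Fin k) (s : Fin k → ℝ)
    (σ τ : Equiv.Perm (Fin n)) :
    gladW n k team s σ * gladP n k team s σ τ =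
      gladW n k team s τ * gladP n k team s τ σ := by
  simp only [gladP_eq_sum_gladMoveP, mul_left_comm (gladW n k team s _), Finset.mul_sum,
    gladW_mul_gladMoveP_comm n k team s σ τ]

theorem sum_gladP (n k : ℕ) (hn : 2 ≤ n) (team : Fin n → Fin k) (s : Fin k → ℝ)
    (hs : ∀ j, 0 < s j) (σ : Equiv.Perm (Fin n)) :
    ∑ τ, gladP n k team s σ τ = 1 := by
  have hn' : (1 : ℝ) < n := by exact_mod_cast hn
  calc ∑ τ, gladP n k team s σ τ
      = 1 / ((n : ℝ) - 1) * ∑ i, ∑ j, ∑ τ, gladMoveP n k team s σ τ i j := by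
        simp only [gladP_eq_sum_gladMoveP, ← Finset.mul_sum]
        rw [Finset.sum_comm]
        exact congrArg _ (Finset.sum_congr rfl fun i _ => Finset.sum_comm)
    _ = 1 / ((n : ℝ) - 1) * ((n - 1 : ℕ) : ℝ) := by
        simp only [sum_gladMoveP n k team s hs, Fin.sum_sum_ite_val_eq_add_one]
    _ = 1 := by
        rw [Nat.cast_sub (by omega), Nat.cast_one, one_div, inv_mul_cancel₀ (by linarith)]

/-- The weight `w(σ) = ∏_g s(g)^{σ⁻¹(g)}` satisfies detailed
balance for the gladiator chain `G_k(n)`; consequently `π = w/∑w` is a probability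
distribution which is reversible (hence stationary) for `G_k(n)`. -/
theorem gladiator_detailed_balance (n k : ℕ) (hn : 2 ≤ n)
    (team : Fin n → Fin k) (s : Fin k → ℝ) (hs : ∀ j, 0 < s j) :
    (∀ σ τ : Equiv.Perm (Fin n),
        gladW n k team s σ * gladP n k team s σ τ =
          gladW n k team s τ * gladP n k team s τ σ) ∧
    (∀ σ : Equiv.Perm (Fin n), 0 ≤ gladPi n k team s σ) ∧
    (∑ σ : Equiv.Perm (Fin n), gladPi n k team s σ) = 1 ∧
    (∀ σ τ : Equiv.Perm (Fin n),
        gladPi n k team s σ * gladP n k team s σ τ =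
          gladPi n k team s τ * gladP n k team s τ σ) ∧
    (∀ τ : Equiv.Perm (Fin n),
        ∑ σ : Equiv.Perm (Fin n), gladPi n k team s σ * gladP n k team s σ τ =
          gladPi n k team s τ) := by
  have hdb := gladW_mul_gladP_comm n k team s
  have hsum : 0 < ∑ τ, gladW n k team s τ :=
    Finset.sum_pos (fun τ _ => gladW_pos n k team s hs τ) Finset.univ_nonempty
  have hπdb : ∀ σ τ : Equiv.Perm (Fin n),
      gladPi n k team s σ * gladP n k team s σ τ =
        gladPi n k team s τ * gladP n k team s τ σ := fun σ τ => by
    simp only [gladPi, div_mul_eq_mul_div, hdb σ τ]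
  refine ⟨hdb, fun σ => div_nonneg (gladW_pos n k team s hs σ).le hsum.le, ?_, hπdb,
    sum_mul_eq_of_detailed_balance hπdb (sum_gladP n k hn team s hs)⟩
  simp only [gladPi, ← Finset.sum_div, div_self hsum.ne']
end

section
/- Let P be the transition matrix of the linear particle system X_k(n) on the state space Ω_{n_1,…,n_k} with type strengths s_1,…,s_k > 0. Define the weight w(v) = ∏_{i=1}^{n} s_{v(i)}^{i} for a word v ∈ Ω_{n_1,…,n_k}. Then w satisfies detailed balance: w(v)·P(v,u) = w(u)·P(u,v) for all u, v ∈ Ω_{n_1,…,n_k}. Consequently, π(v) = w(v)/∑_{u} w(u) is a reversible (hence stationary) distribution for X_k(n). -/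
open Finset

/-- State space `Ω_{n₁,…,n_k}` of the linear particle system: words of length `n`
over `{1,…,k}` with exactly `cnt j` letters equal to `j`. -/
abbrev PSpace (n k : ℕ) (cnt : Fin k → ℕ) : Type :=
  {w : Fin n → Fin k // ∀ j : Fin k, (Finset.univ.filter fun i => w i = j).card = cnt j}

/-- Transition matrix of the linear particle system `X_k(n)`: from state `v`, a
position `i` with `i+1 < n` is chosen uniformly; if the two letters are equal nothing
happens, otherwise they are swapped with probability `s(v i)/(s(v i)+s(v (i+1)))`. -/
noncomputable def partP (n k : ℕ) (cnt : Fin k → ℕ) (s : Fin k → ℝ) :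
    Matrix (PSpace n k cnt) (PSpace n k cnt) ℝ :=
  fun v u => (1 / ((n : ℝ) - 1)) * ∑ i : Fin n, ∑ j : Fin n,
    if (j : ℕ) = (i : ℕ) + 1 then
      if v.1 i = v.1 j then (if u = v then 1 else 0)
      else
        (s (v.1 i) / (s (v.1 i) + s (v.1 j))) *
          (if u.1 = v.1 ∘ Equiv.swap i j then 1 else 0)
        + (s (v.1 j) / (s (v.1 i) + s (v.1 j))) *
          (if u = v then 1 else 0)
    else 0

/-- Unnormalized stationary weight of the linear particle system:
`w(v) = ∏_i s(v i)^i` (positions counted `1,…,n`). -/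
noncomputable def partW (n k : ℕ) (cnt : Fin k → ℕ) (s : Fin k → ℝ)
    (v : PSpace n k cnt) : ℝ :=
  ∏ i : Fin n, s (v.1 i) ^ ((i : ℕ) + 1)

/-- Stationary distribution of the linear particle system. -/
noncomputable def partPi (n k : ℕ) (cnt : Fin k → ℕ) (s : Fin k → ℝ)
    (v : PSpace n k cnt) : ℝ :=
  partW n k cnt s v / ∑ u : PSpace n k cnt, partW n k cnt s u

/-!
Only a swap of two distinct adjacent letters `a = v i`, `b = v (i + 1)` changes the state. The
positions `i` and `i + 1` carry exponents differing by one in `w`, so swapping them multiplies the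
weight by `s b / s a`, while the ratio of the forward and backward swap probabilities is
`(s a / (s a + s b)) / (s b / (s b + s a)) = s a / s b`; hence `w v * P v u = w u * P u v` term by
term. Normalising `w` keeps detailed balance, and summing it over `v`, using that the rows of `P`
sum to `1` (there are exactly `n - 1` adjacent pairs), gives stationarity.
-/

section DetailedBalance

variable {α : Type*}

def IsDetailedBalanced (π : α → ℝ) (P : Matrix α α ℝ) : Prop :=
  ∀ v u, π v * P v u = π u * P u v

theorem IsDetailedBalanced.div_const {w : α → ℝ} {P : Matrix α α ℝ}
    (h : IsDetailedBalanced w P) (c : ℝ) : IsDetailedBalanced (fun v => w v / c) P :=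
  fun v u => by simp only [div_mul_eq_mul_div, h v u]

theorem IsDetailedBalanced.vecMul_eq_self [Fintype α] {π : α → ℝ} {P : Matrix α α ℝ}
    (h : IsDetailedBalanced π P) (hP : ∀ v, ∑ u, P v u = 1) : Matrix.vecMul π P = π :=
  funext fun u => by simp only [Matrix.vecMul, dotProduct, h _ u, ← Finset.mul_sum, hP, mul_one]

end DetailedBalance

namespace PSpace

variable {n k : ℕ} {cnt : Fin k → ℕ}

theorem card_filter_comp_perm (w : Fin n → Fin k) (σ : Equiv.Perm (Fin n)) (j : Fin k) :
    (univ.filter fun i => w (σ i) = j).card = (univ.filter fun i => w i = j).card :=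
  Finset.card_equiv σ fun i => by simp

noncomputable def swap (v : PSpace n k cnt) (i j : Fin n) : PSpace n k cnt :=
  ⟨v.1 ∘ Equiv.swap i j, fun t => (card_filter_comp_perm v.1 (Equiv.swap i j) t).trans (v.2 t)⟩

theorem val_eq_comp_swap_iff {u v : PSpace n k cnt} {i j : Fin n} :
    u.1 = v.1 ∘ Equiv.swap i j ↔ u = swap v i j :=
  ⟨fun h => Subtype.ext h, fun h => h ▸ rfl⟩

@[simp]
theorem swap_apply_left (v : PSpace n k cnt) (i j : Fin n) : (swap v i j).1 i = v.1 j := by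
  simp [swap]

@[simp]
theorem swap_apply_right (v : PSpace n k cnt) (i j : Fin n) : (swap v i j).1 j = v.1 i := by
  simp [swap]

theorem swap_swap (v : PSpace n k cnt) (i j : Fin n) : swap (swap v i j) i j = v :=
  Subtype.ext <| funext fun m => by simp [swap]

theorem eq_swap_comm {u v : PSpace n k cnt} {i j : Fin n} : u = swap v i j ↔ v = swap u i j :=
  ⟨fun h => h ▸ (swap_swap v i j).symm, fun h => h ▸ (swap_swap u i j).symm⟩

-- The word that fills the `j`-th block of `cnt j` positions with the letter `j`.
theorem nonempty (cnt : Fin k → ℕ) : Nonempty (PSpace (∑ j, cnt j) k cnt) := by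
  refine ⟨⟨fun i => (finSigmaFinEquiv.symm i).1, fun j => ?_⟩⟩
  have hreindex : (univ.filter fun i => (finSigmaFinEquiv.symm i).1 = j).card =
      (univ.filter fun p : Σ j : Fin k, Fin (cnt j) => p.1 = j).card :=
    Finset.card_equiv finSigmaFinEquiv.symm fun i => by simp
  rw [hreindex, Finset.card_filter, ← Finset.univ_sigma_univ, Finset.sum_sigma]
  simp [apply_ite Finset.card]

end PSpace

section LinearParticleSystem

variable {n k : ℕ} {cnt : Fin k → ℕ} {s : Fin k → ℝ}

noncomputable def swapKernel (s : Fin k → ℝ) (v u : PSpace n k cnt) (i j : Fin n) : ℝ :=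
  if v.1 i = v.1 j then (if u = v then 1 else 0)
  else
    (s (v.1 i) / (s (v.1 i) + s (v.1 j))) * (if u.1 = v.1 ∘ Equiv.swap i j then 1 else 0)
      + (s (v.1 j) / (s (v.1 i) + s (v.1 j))) * (if u = v then 1 else 0)

theorem partP_apply (v u : PSpace n k cnt) :
    partP n k cnt s v u =
      1 / ((n : ℝ) - 1) * ∑ i : Fin n, ∑ j : Fin n,
        if (j : ℕ) = (i : ℕ) + 1 then swapKernel s v u i j else 0 :=
  rfl

theorem partW_pos (hs : ∀ j, 0 < s j) (v : PSpace n k cnt) : 0 < partW n k cnt s v :=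
  Finset.prod_pos fun _ _ => pow_pos (hs _) _

theorem partW_mul_eq_partW_swap_mul (v : PSpace n k cnt) {i j : Fin n}
    (hij : (j : ℕ) = (i : ℕ) + 1) :
    partW n k cnt s v * s (v.1 i) = partW n k cnt s (PSpace.swap v i j) * s (v.1 j) := by
  have hne : i ≠ j := by rintro rfl; omega
  have hsplit (w : Fin n → Fin k) : ∏ m, s (w m) ^ ((m : ℕ) + 1) =
      s (w i) ^ ((i : ℕ) + 1) * s (w j) ^ ((i : ℕ) + 2) *
        ∏ m ∈ ({i, j} : Finset (Fin n))ᶜ, s (w m) ^ ((m : ℕ) + 1) := by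
    rw [← Finset.prod_mul_prod_compl {i, j}, Finset.prod_pair hne, hij]
  have hrest : ∀ m ∈ ({i, j} : Finset (Fin n))ᶜ,
      s ((PSpace.swap v i j).1 m) ^ ((m : ℕ) + 1) = s (v.1 m) ^ ((m : ℕ) + 1) := by
    intro m hm
    simp only [Finset.mem_compl, Finset.mem_insert, Finset.mem_singleton, not_or] at hm
    simp [PSpace.swap, Equiv.swap_apply_of_ne_of_ne hm.1 hm.2]
  unfold partW
  rw [hsplit v.1, hsplit (PSpace.swap v i j).1, Finset.prod_congr rfl hrest,
    PSpace.swap_apply_left, PSpace.swap_apply_right]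
  ring

theorem partW_mul_swapKernel (v u : PSpace n k cnt) {i j : Fin n}
    (hij : (j : ℕ) = (i : ℕ) + 1) :
    partW n k cnt s v * swapKernel s v u i j = partW n k cnt s u * swapKernel s u v i j := by
  rcases eq_or_ne u v with rfl | huv
  · rfl
  unfold swapKernel
  simp only [if_neg huv, if_neg huv.symm, PSpace.val_eq_comp_swap_iff, mul_zero, add_zero]
  by_cases hsw : u = PSpace.swap v i j
  · have hsw' := PSpace.eq_swap_comm.1 hsw
    subst hsw
    simp only [PSpace.swap_apply_left, PSpace.swap_apply_right, if_true, if_pos hsw', mul_one]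
    by_cases hv : v.1 i = v.1 j
    · simp [hv]
    · rw [if_neg hv, if_neg (Ne.symm hv), add_comm (s (v.1 j)), mul_div_assoc', mul_div_assoc',
        partW_mul_eq_partW_swap_mul v hij]
  · simp [hsw, mt PSpace.eq_swap_comm.2 hsw]

theorem isDetailedBalanced_partW_partP :
    IsDetailedBalanced (partW n k cnt s) (partP n k cnt s) := by
  intro v u
  rw [partP_apply, partP_apply, mul_left_comm, mul_left_comm (partW n k cnt s u)]
  congr 1
  simp only [Finset.mul_sum]
  refine Finset.sum_congr rfl fun i _ => Finset.sum_congr rfl fun j _ => ?_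
  split_ifs with hij
  · exact partW_mul_swapKernel v u hij
  · rw [mul_zero, mul_zero]

theorem sum_swapKernel (hs : ∀ j, 0 < s j) (v : PSpace n k cnt) (i j : Fin n) :
    ∑ u, swapKernel s v u i j = 1 := by
  unfold swapKernel
  split_ifs with hv
  · simp
  · simp only [Finset.sum_add_distrib, ← Finset.mul_sum, PSpace.val_eq_comp_swap_iff,
      Fintype.sum_ite_eq', mul_one, ← add_div]
    exact div_self (add_pos (hs _) (hs _)).ne'

theorem sum_adjacent_pairs (n : ℕ) :
    ∑ i : Fin n, ∑ j : Fin n, (if (j : ℕ) = (i : ℕ) + 1 then (1 : ℝ) else 0) = (n - 1 : ℕ) := by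
  have hinner (i : Fin n) : ∑ j : Fin n, (if (j : ℕ) = (i : ℕ) + 1 then (1 : ℝ) else 0) =
      if (i : ℕ) + 1 < n then 1 else 0 := by
    rw [Fin.sum_univ_eq_sum_range (fun j => if j = (i : ℕ) + 1 then (1 : ℝ) else 0),
      Finset.sum_ite_eq']
    simp only [Finset.mem_range]
  have hfilter : (range n).filter (· + 1 < n) = range (n - 1) := by
    ext t
    simp only [Finset.mem_filter, Finset.mem_range]
    omega
  simp only [hinner]
  rw [Fin.sum_univ_eq_sum_range (fun i => if i + 1 < n then (1 : ℝ) else 0), Finset.sum_boole,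
    hfilter, Finset.card_range]

theorem sum_partP (hn : 2 ≤ n) (hs : ∀ j, 0 < s j) (v : PSpace n k cnt) :
    ∑ u, partP n k cnt s v u = 1 := by
  simp only [partP_apply, ← Finset.mul_sum]
  rw [Finset.sum_comm]
  simp only [Finset.sum_comm (γ := PSpace n k cnt), Finset.sum_ite_irrel, sum_swapKernel hs,
    Finset.sum_const_zero]
  have hn' : (1 : ℝ) < n := by exact_mod_cast hn
  rw [sum_adjacent_pairs, Nat.cast_sub (by omega), Nat.cast_one, one_div,
    inv_mul_cancel₀ (sub_pos.2 hn').ne']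

end LinearParticleSystem

/-- The weight `w(v) = ∏_i s_{v(i)}^i` satisfies detailed balance
for the linear particle system `X_k(n)` on `Ω_{n₁,…,n_k}` (`n = n₁+⋯+n_k`);
consequently `π = w/∑w` is a probability distribution which is reversible (hence
stationary) for `X_k(n)`. -/
theorem particle_detailed_balance (k : ℕ) (cnt : Fin k → ℕ) (hn : 2 ≤ ∑ j, cnt j)
    (s : Fin k → ℝ) (hs : ∀ j, 0 < s j) :
    (∀ v u : PSpace (∑ j, cnt j) k cnt,
        partW (∑ j, cnt j) k cnt s v * partP (∑ j, cnt j) k cnt s v u =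
          partW (∑ j, cnt j) k cnt s u * partP (∑ j, cnt j) k cnt s u v) ∧
    (∀ v : PSpace (∑ j, cnt j) k cnt, 0 ≤ partPi (∑ j, cnt j) k cnt s v) ∧
    (∑ v : PSpace (∑ j, cnt j) k cnt, partPi (∑ j, cnt j) k cnt s v) = 1 ∧
    (∀ v u : PSpace (∑ j, cnt j) k cnt,
        partPi (∑ j, cnt j) k cnt s v * partP (∑ j, cnt j) k cnt s v u =
          partPi (∑ j, cnt j) k cnt s u * partP (∑ j, cnt j) k cnt s u v) ∧
    (∀ u : PSpace (∑ j, cnt j) k cnt,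
        ∑ v : PSpace (∑ j, cnt j) k cnt,
          partPi (∑ j, cnt j) k cnt s v * partP (∑ j, cnt j) k cnt s v u =
          partPi (∑ j, cnt j) k cnt s u) := by
  have : Nonempty (PSpace (∑ j, cnt j) k cnt) := PSpace.nonempty cnt
  have hdb : IsDetailedBalanced (partW (∑ j, cnt j) k cnt s) (partP (∑ j, cnt j) k cnt s) :=
    isDetailedBalanced_partW_partP
  have htotal : 0 < ∑ u : PSpace (∑ j, cnt j) k cnt, partW (∑ j, cnt j) k cnt s u :=
    Finset.sum_pos (fun u _ => partW_pos hs u) univ_nonempty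
  have hπ : IsDetailedBalanced (partPi (∑ j, cnt j) k cnt s) (partP (∑ j, cnt j) k cnt s) :=
    hdb.div_const _
  refine ⟨hdb, fun v => div_nonneg (partW_pos hs v).le htotal.le, ?_, hπ,
    congrFun (hπ.vecMul_eq_self (sum_partP hn hs))⟩
  unfold partPi
  rw [← Finset.sum_div, div_self htotal.ne']
end
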